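/- For the quasi-conformal coframe: (i) ⁽⁵⁾A_{ab} = C_{man}C^n{}_b{}^m has spatial entries ⁽⁵⁾A_{ij} = 3e^{−2f}fᵢfⱼ (including the diagonal) and all entries involving the index 0 vanish, with trace η^{ab}⁽⁵⁾A_{ab} = −3e^{−2f}∇²f; (ii) ⁽⁶⁾A_{ab} = C_{man}C^m{}_b{}^n satisfies ⁽⁶⁾A₀₀ = −e^{−2f}∇²f, ⁽⁶⁾A_{ii} = e^{−2f}(2fᵢ² + ∇²f), ⁽⁶⁾A_{ij} = 2e^{−2f}fᵢfⱼ for spatial i ≠ j, vanishing time–space entries, and trace η^{ab}⁽⁶⁾A_{ab} = −6e^{−2f}∇²f; (iii) ⁽⁷⁾A_{ab} = C_aC_b has spatial entries ⁽⁷⁾A_{ij} = e^{−2f}fᵢfⱼ, all entries involving the index 0 vanish, and trace η^{ab}⁽⁷⁾A_{ab} = −e^{−2f}∇²f. -/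
import Mathlib


open scoped BigOperators

noncomputable section

/-- Partial derivative along coordinate `i` on `ℝ³`. -/
def pd (i : Fin 3) (f : (Fin 3 → ℝ) → ℝ) : (Fin 3 → ℝ) → ℝ :=
  fun x => fderiv ℝ f x (Pi.single i 1)

/-- Partial derivative indexed by a 4-index: zero for the time index `0`. -/
def pd4 (f : (Fin 3 → ℝ) → ℝ) (p : Fin 4) : (Fin 3 → ℝ) → ℝ :=
  if h : p = 0 then 0 else pd (p.pred h) f

/-- Signs of the Minkowski metric `η = diag(1,−1,−1,−1)`. -/
def epsM (a : Fin 4) : ℝ := if a = 0 then 1 else -1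

/-- The Minkowski metric `η = diag(1,−1,−1,−1)`. -/
def etaM (a b : Fin 4) : ℝ := if a = b then epsM a else 0

/-- Anholonomity objects `C^a_{mn}` of the quasi-conformal coframe
`ϑ⁰ = e^{−f}dt`, `ϑⁱ = e^{f}dxⁱ`:  `C⁰_{0i} = e^{−f}fᵢ`, `C^i_{ij} = −e^{−f}fⱼ`
(spatial `i ≠ j`), antisymmetric in the lower pair, all other components zero. -/
def Cob (f : (Fin 3 → ℝ) → ℝ) (a m n : Fin 4) : (Fin 3 → ℝ) → ℝ := fun x =>
  if a = 0 then
    Real.exp (-f x) * ((if m = 0 then pd4 f n x else 0) - (if n = 0 then pd4 f m x else 0))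
  else
    Real.exp (-f x) * ((if n = a then pd4 f m x else 0) - (if m = a then pd4 f n x else 0))

/-- The contraction `C_a := C^m_{am}`. -/
def Cone (f : (Fin 3 → ℝ) → ℝ) (a : Fin 4) : (Fin 3 → ℝ) → ℝ :=
  fun x => ∑ m : Fin 4, Cob f m a m x

/-- The B-objects `B^a_{mn0} := 0`, `B^a_{mnp} := e^{−f} ∂_p C^a_{mn}` for `p = 1,2,3`. -/
def Bob (f : (Fin 3 → ℝ) → ℝ) (a m n p : Fin 4) : (Fin 3 → ℝ) → ℝ :=
  fun x => Real.exp (-f x) * pd4 (Cob f a m n) p x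

/-- `⁽¹⁾B_{ab} := B_{abm}{}^m` (indices moved with `η`). -/
def B1 (f : (Fin 3 → ℝ) → ℝ) (a b : Fin 4) : (Fin 3 → ℝ) → ℝ :=
  fun x => epsM a * ∑ m : Fin 4, epsM m * Bob f a b m m x

/-- `⁽²⁾B_{ab} := B^m{}_{mab}`. -/
def B2 (f : (Fin 3 → ℝ) → ℝ) (a b : Fin 4) : (Fin 3 → ℝ) → ℝ :=
  fun x => ∑ m : Fin 4, Bob f m m a b x

/-- `⁽³⁾B_{ab} := B^m{}_{abm}`. -/
def B3 (f : (Fin 3 → ℝ) → ℝ) (a b : Fin 4) : (Fin 3 → ℝ) → ℝ :=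
  fun x => ∑ m : Fin 4, Bob f m a b m x

/-- The scalar B-object `B := η^{ab}⁽¹⁾B_{ab}`. -/
def Bscalar (f : (Fin 3 → ℝ) → ℝ) : (Fin 3 → ℝ) → ℝ :=
  fun x => ∑ a : Fin 4, epsM a * B1 f a a x

/-- `⁽¹⁾A_{ab} := C_{abm}C^m`. -/
def A1 (f : (Fin 3 → ℝ) → ℝ) (a b : Fin 4) : (Fin 3 → ℝ) → ℝ :=
  fun x => epsM a * ∑ m : Fin 4, epsM m * Cob f a b m x * Cone f m x

/-- `⁽²⁾A_{ab} := C_{mab}C^m`. -/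
def A2 (f : (Fin 3 → ℝ) → ℝ) (a b : Fin 4) : (Fin 3 → ℝ) → ℝ :=
  fun x => ∑ m : Fin 4, Cob f m a b x * Cone f m x

/-- `⁽³⁾A_{ab} := C_{amn}C_b{}^{mn}`. -/
def A3 (f : (Fin 3 → ℝ) → ℝ) (a b : Fin 4) : (Fin 3 → ℝ) → ℝ :=
  fun x => epsM a * epsM b *
    ∑ m : Fin 4, ∑ n : Fin 4, epsM m * epsM n * Cob f a m n x * Cob f b m n x

/-- `⁽⁴⁾A_{ab} := C_{amn}C^m{}_b{}^n`. -/
def A4 (f : (Fin 3 → ℝ) → ℝ) (a b : Fin 4) : (Fin 3 → ℝ) → ℝ :=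
  fun x => epsM a * ∑ m : Fin 4, ∑ n : Fin 4, epsM n * Cob f a m n x * Cob f m b n x

/-- `⁽⁵⁾A_{ab} := C_{man}C^n{}_b{}^m`. -/
def A5 (f : (Fin 3 → ℝ) → ℝ) (a b : Fin 4) : (Fin 3 → ℝ) → ℝ :=
  fun x => ∑ m : Fin 4, ∑ n : Fin 4, Cob f m a n x * Cob f n b m x

/-- `⁽⁶⁾A_{ab} := C_{man}C^m{}_b{}^n`. -/
def A6 (f : (Fin 3 → ℝ) → ℝ) (a b : Fin 4) : (Fin 3 → ℝ) → ℝ :=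
  fun x => ∑ m : Fin 4, ∑ n : Fin 4, epsM m * epsM n * Cob f m a n x * Cob f m b n x

/-- `⁽⁷⁾A_{ab} := C_a C_b`. -/
def A7 (f : (Fin 3 → ℝ) → ℝ) (a b : Fin 4) : (Fin 3 → ℝ) → ℝ :=
  fun x => Cone f a x * Cone f b x

/-- `⁽¹⁾A := η^{ab}⁽¹⁾A_{ab}`. -/
def A1s (f : (Fin 3 → ℝ) → ℝ) : (Fin 3 → ℝ) → ℝ :=
  fun x => ∑ a : Fin 4, epsM a * A1 f a a x

/-- `⁽²⁾A := η^{ab}⁽³⁾A_{ab}`. -/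
def A2s (f : (Fin 3 → ℝ) → ℝ) : (Fin 3 → ℝ) → ℝ :=
  fun x => ∑ a : Fin 4, epsM a * A3 f a a x

/-- `⁽³⁾A := η^{ab}⁽⁴⁾A_{ab}`. -/
def A3s (f : (Fin 3 → ℝ) → ℝ) : (Fin 3 → ℝ) → ℝ :=
  fun x => ∑ a : Fin 4, epsM a * A4 f a a x

/-- `φ_{ij} := f_{ij} − fᵢfⱼ`. -/
def phiM (f : (Fin 3 → ℝ) → ℝ) (i j : Fin 3) : (Fin 3 → ℝ) → ℝ :=
  fun x => pd i (pd j f) x - pd i f x * pd j f x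

/-- `Δ̃φ := φ₁₁ + φ₂₂ + φ₃₃`. -/
def tphi (f : (Fin 3 → ℝ) → ℝ) : (Fin 3 → ℝ) → ℝ :=
  fun x => ∑ i : Fin 3, phiM f i i x

/-- The Laplacian `Δf := f₁₁ + f₂₂ + f₃₃`. -/
def lap (f : (Fin 3 → ℝ) → ℝ) : (Fin 3 → ℝ) → ℝ :=
  fun x => ∑ i : Fin 3, pd i (pd i f) x

/-- `∇²f := f₁² + f₂² + f₃²`. -/
def grad2 (f : (Fin 3 → ℝ) → ℝ) : (Fin 3 → ℝ) → ℝ :=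
  fun x => ∑ i : Fin 3, pd i f x ^ 2

/-- The leading (second order) part
`L_{ab} = β₁⁽¹⁾B_{(ab)} + β₂⁽²⁾B_{(ab)} + β₃⁽³⁾B_{ab} + β₄η_{ab}B + β₅⁽¹⁾B_{[ab]} + β₆⁽²⁾B_{[ab]}`. -/
def Lmat (β₁ β₂ β₃ β₄ β₅ β₆ : ℝ) (f : (Fin 3 → ℝ) → ℝ) (a b : Fin 4) :
    (Fin 3 → ℝ) → ℝ := fun x =>
  β₁ * ((B1 f a b x + B1 f b a x) / 2) + β₂ * ((B2 f a b x + B2 f b a x) / 2) +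
  β₃ * B3 f a b x + β₄ * etaM a b * Bscalar f x +
  β₅ * ((B1 f a b x - B1 f b a x) / 2) + β₆ * ((B2 f a b x - B2 f b a x) / 2)

/-- The quadratic part `Q_{ab}`. -/
def Qmat (α₁ α₂ α₃ α₄ α₅ α₆ α₇ α₈ α₉ α₁₀ α₁₁ α₁₂ : ℝ) (f : (Fin 3 → ℝ) → ℝ)
    (a b : Fin 4) : (Fin 3 → ℝ) → ℝ := fun x =>
  α₁ * ((A1 f a b x + A1 f b a x) / 2) + α₂ * A2 f a b x + α₃ * A3 f a b x +
  α₄ * ((A4 f a b x + A4 f b a x) / 2) + α₅ * A5 f a b x + α₆ * A6 f a b x +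
  α₇ * A7 f a b x + α₈ * ((A1 f a b x - A1 f b a x) / 2) +
  α₉ * ((A4 f a b x - A4 f b a x) / 2) +
  etaM a b * (α₁₀ * A1s f x + α₁₁ * A2s f x + α₁₂ * A3s f x)

/-- `diag(β₁−β₄, β₁+β₄, β₁+β₄, β₁+β₄)`. -/
def diagM (β₁ β₄ : ℝ) (a b : Fin 4) : ℝ :=
  if a = b then (if a = 0 then β₁ - β₄ else β₁ + β₄) else 0

lemma pd4_zero' (f : (Fin 3 → ℝ) → ℝ) : pd4 f 0 = 0 := by simp [pd4]
lemma pd4_one' (f : (Fin 3 → ℝ) → ℝ) : pd4 f 1 = pd 0 f := rfl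
lemma pd4_two' (f : (Fin 3 → ℝ) → ℝ) : pd4 f 2 = pd 1 f := rfl
lemma pd4_three' (f : (Fin 3 → ℝ) → ℝ) : pd4 f 3 = pd 2 f := rfl
lemma succ0' : (0:Fin 3).succ = 1 := rfl
lemma succ1' : (1:Fin 3).succ = 2 := rfl
lemma succ2' : (2:Fin 3).succ = 3 := rfl

set_option maxHeartbeats 3200000 in
/-- for the quasi-conformal coframe, explicit forms of
`⁽⁵⁾A_{ab} = C_{man}C^n{}_b{}^m`, `⁽⁶⁾A_{ab} = C_{man}C^m{}_b{}^n` and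
`⁽⁷⁾A_{ab} = C_aC_b`, together with their traces `−3e^{−2f}∇²f`, `−6e^{−2f}∇²f`
and `−e^{−2f}∇²f`. -/
theorem A5_A6_A7_explicit (f : (Fin 3 → ℝ) → ℝ) (hf : ContDiff ℝ (⊤ : ℕ∞) f)
    (x : Fin 3 → ℝ) :
    ((∀ i j : Fin 3, A5 f i.succ j.succ x =
       3 * Real.exp (-2 * f x) * (pd i f x * pd j f x)) ∧
     (∀ a : Fin 4, A5 f 0 a x = 0 ∧ A5 f a 0 x = 0) ∧
     (∑ a : Fin 4, epsM a * A5 f a a x) = -3 * Real.exp (-2 * f x) * grad2 f x) ∧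
    (A6 f 0 0 x = -Real.exp (-2 * f x) * grad2 f x ∧
     (∀ i : Fin 3, A6 f i.succ i.succ x =
       Real.exp (-2 * f x) * (2 * pd i f x ^ 2 + grad2 f x)) ∧
     (∀ i j : Fin 3, i ≠ j → A6 f i.succ j.succ x =
       2 * Real.exp (-2 * f x) * (pd i f x * pd j f x)) ∧
     (∀ i : Fin 3, A6 f 0 i.succ x = 0 ∧ A6 f i.succ 0 x = 0) ∧
     (∑ a : Fin 4, epsM a * A6 f a a x) = -6 * Real.exp (-2 * f x) * grad2 f x) ∧
    ((∀ i j : Fin 3, A7 f i.succ j.succ x =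
       Real.exp (-2 * f x) * (pd i f x * pd j f x)) ∧
     (∀ a : Fin 4, A7 f 0 a x = 0 ∧ A7 f a 0 x = 0) ∧
     (∑ a : Fin 4, epsM a * A7 f a a x) = -Real.exp (-2 * f x) * grad2 f x) := by
  have hE2 : Real.exp (-(f x * 2)) = Real.exp (-f x) * Real.exp (-f x) := by
    rw [← Real.exp_add]; ring_nf
  refine ⟨⟨?_, ?_, ?_⟩, ⟨?_, ?_, ?_, ?_, ?_⟩, ?_, ?_, ?_⟩
  · intro i j; fin_cases i <;> fin_cases j <;> (simp [A5, A6, A7, Cob, Cone, epsM, grad2, Fin.sum_univ_four, Fin.sum_univ_three, pd4_zero', pd4_one', pd4_two', pd4_three', succ0', succ1', succ2'] <;> (first | (ring_nf; rw [hE2]; ring) | ring))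
  · intro a; fin_cases a <;> constructor <;> (simp [A5, A6, A7, Cob, Cone, epsM, grad2, Fin.sum_univ_four, Fin.sum_univ_three, pd4_zero', pd4_one', pd4_two', pd4_three', succ0', succ1', succ2'] <;> (first | (ring_nf; rw [hE2]; ring) | ring))
  · simp [A5, A6, A7, Cob, Cone, epsM, grad2, Fin.sum_univ_four, Fin.sum_univ_three, pd4_zero', pd4_one', pd4_two', pd4_three', succ0', succ1', succ2'] <;> (first | (ring_nf; rw [hE2]; ring) | ring)
  · simp [A5, A6, A7, Cob, Cone, epsM, grad2, Fin.sum_univ_four, Fin.sum_univ_three, pd4_zero', pd4_one', pd4_two', pd4_three', succ0', succ1', succ2'] <;> (first | (ring_nf; rw [hE2]; ring) | ring)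
  · intro i; fin_cases i <;> (simp [A5, A6, A7, Cob, Cone, epsM, grad2, Fin.sum_univ_four, Fin.sum_univ_three, pd4_zero', pd4_one', pd4_two', pd4_three', succ0', succ1', succ2'] <;> (first | (ring_nf; rw [hE2]; ring) | ring))
  · intro i j hij; fin_cases i <;> fin_cases j <;>
      first
      | exact absurd rfl hij
      | (simp [A5, A6, A7, Cob, Cone, epsM, grad2, Fin.sum_univ_four, Fin.sum_univ_three, pd4_zero', pd4_one', pd4_two', pd4_three', succ0', succ1', succ2'] <;> (first | (ring_nf; rw [hE2]; ring) | ring))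
  · intro i; fin_cases i <;> constructor <;> (simp [A5, A6, A7, Cob, Cone, epsM, grad2, Fin.sum_univ_four, Fin.sum_univ_three, pd4_zero', pd4_one', pd4_two', pd4_three', succ0', succ1', succ2'] <;> (first | (ring_nf; rw [hE2]; ring) | ring))
  · simp [A5, A6, A7, Cob, Cone, epsM, grad2, Fin.sum_univ_four, Fin.sum_univ_three, pd4_zero', pd4_one', pd4_two', pd4_three', succ0', succ1', succ2'] <;> (first | (ring_nf; rw [hE2]; ring) | ring)
  · intro i j; fin_cases i <;> fin_cases j <;> (simp [A5, A6, A7, Cob, Cone, epsM, grad2, Fin.sum_univ_four, Fin.sum_univ_three, pd4_zero', pd4_one', pd4_two', pd4_three', succ0', succ1', succ2'] <;> (first | (ring_nf; rw [hE2]; ring) | ring))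
  · intro a; fin_cases a <;> constructor <;> (simp [A5, A6, A7, Cob, Cone, epsM, grad2, Fin.sum_univ_four, Fin.sum_univ_three, pd4_zero', pd4_one', pd4_two', pd4_three', succ0', succ1', succ2'] <;> (first | (ring_nf; rw [hE2]; ring) | ring))
  · simp [A5, A6, A7, Cob, Cone, epsM, grad2, Fin.sum_univ_four, Fin.sum_univ_three, pd4_zero', pd4_one', pd4_two', pd4_three', succ0', succ1', succ2'] <;> (first | (ring_nf; rw [hE2]; ring) | ring)
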